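/- Let V be a finite-dimensional real vector space, U a finite-dimensional real vector space equipped with a nondegenerate symmetric bilinear form ⟨·,·⟩ of Lorentzian signature (i.e. negative index 1), and β : V × V → U a symmetric bilinear map that is flat with respect to ⟨·,·⟩. If dim V > dim U and β(x,x) ≠ 0 for every nonzero x ∈ V, then there exist a nonzero isotropic vector e ∈ U (i.e. ⟨e,e⟩ = 0) and a symmetric bilinear form φ : V × V → ℝ such that the nullity space of β − φ·e has dimension at least dim V − dim U + 2. -/

import Mathlib

/-!
Pick `x₀` at which `β x₀ : V → U` has maximal rank. Since the rank cannot jump up along the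
pencil `β (x₀ + t • y)`, every `β y z` with `z ∈ ker (β x₀)` lies in `range (β x₀)`, and flatness
makes it orthogonal to `range (β x₀)`. These vectors are therefore isotropic and mutually
orthogonal, so in Lorentzian signature they all lie on one null line, spanned by
`e = β z₀ z₀` for any `z₀ ≠ 0` in the kernel (which exists because `dim V > dim U`).
With `φ = f ∘ β` for a functional `f` with `f e = 1`, the kernel of `β x₀` lies in the nullity
space of `β - φ • e`, which gives the bound unless `rank β x₀ = dim U - 1`. In that case
`(range β x₀)ᗮ = ℝ e`, and flatness puts any preimage of `e` under `β x₀` into the nullity space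
as well, one dimension beyond the kernel.
-/

open Module Submodule LinearMap

open Filter Topology in
theorem LinearMap.mem_range_of_finrank_range_add_smul_le {V W : Type*} [AddCommGroup V]
    [Module ℝ V] [AddCommGroup W] [Module ℝ W] [FiniteDimensional ℝ W] (A C : V →ₗ[ℝ] W)
    (hA : ∀ t : ℝ, finrank ℝ (range (A + t • C)) ≤ finrank ℝ (range A))
    {z : V} (hz : A z = 0) : C z ∈ range A := by
  by_contra hCz
  set k := finrank ℝ (range A)
  let b := finBasis ℝ (range A)
  choose v hv using fun j => (b j).2
  -- `f₀ + t • d` lies in `range (A + t • C)` for `t ≠ 0`, and is linearly independent at `t = 0`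
  let f₀ : Fin (k + 1) → W := Fin.snoc (A ∘ v) (C z)
  let d : Fin (k + 1) → W := Fin.snoc (C ∘ v) 0
  have hf₀ : LinearIndependent ℝ f₀ := by
    have hAv : A ∘ v = (range A).subtype ∘ b := funext hv
    refine linearIndependent_finSnoc.2 ⟨?_, ?_⟩
    · rw [hAv]
      exact b.linearIndependent.map' _ (ker_subtype _)
    · rwa [hAv, Set.range_comp, ← map_span, b.span_eq, Submodule.map_top, range_subtype]
  have hdep : ∀ t : ℝ, t ≠ 0 → ¬ LinearIndependent ℝ (f₀ + t • d) := by
    intro t ht hind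
    have hle : span ℝ (Set.range (f₀ + t • d)) ≤ range (A + t • C) := by
      refine span_le.2 (Set.range_subset_iff.2 fun j => ?_)
      induction j using Fin.lastCases with
      | last => exact ⟨t⁻¹ • z, by simp [f₀, d, hz, smul_smul, ht]⟩
      | cast j => exact ⟨v j, by simp [f₀, d]⟩
    have := (finrank_span_eq_card hind).symm.trans_le ((finrank_mono hle).trans (hA t))
    simp at this
  let E := (finBasis ℝ W).equivFun
  have hcont : Continuous fun t : ℝ => E ∘ (f₀ + t • d) := by
    have : (fun t : ℝ => E ∘ (f₀ + t • d)) = fun t => E ∘ f₀ + t • (E ∘ d) := by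
      ext t j : 2
      simp
    rw [this]
    fun_prop
  have hev : ∀ᶠ t in 𝓝[≠] (0 : ℝ), LinearIndependent ℝ (E ∘ (f₀ + t • d)) :=
    (hcont.tendsto' 0 _ (by simp)).mono_left nhdsWithin_le_nhds |>.eventually
      (hf₀.map' E.toLinearMap E.ker).eventually
  obtain ⟨t, hind, ht⟩ := (hev.and self_mem_nhdsWithin).exists
  exact hdep t ht (hind.of_comp E.toLinearMap)

section Lorentzian

variable {U : Type*} [AddCommGroup U] [Module ℝ U] {B : U →ₗ[ℝ] U →ₗ[ℝ] ℝ}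

lemma LinearMap.SeparatingLeft.exists_apply_eq_one_apply_eq_zero (hB : B.SeparatingLeft)
    {e w : U} (hew : LinearIndependent ℝ ![e, w]) : ∃ u, B e u = 1 ∧ B w u = 0 := by
  by_contra! H
  have hker : ⨅ _ : Unit, LinearMap.ker (B w) ≤ LinearMap.ker (B e) := fun u hu => by
    rw [iInf_const, LinearMap.mem_ker] at hu
    by_contra hu'
    exact H ((B e u)⁻¹ • u) (by simpa using inv_mul_cancel₀ hu') (by simp [hu])
  obtain ⟨c, hc⟩ := mem_span_singleton.1 (by simpa using mem_span_of_iInf_ker_le_ker hker)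
  have : c • w - e = 0 := hB _ fun u => by simp [← hc]
  simpa using LinearIndependent.pair_iff.1 hew (-1) c (by rw [← this]; module)

lemma exists_smul_add_smul_nonneg
    (hBlor : ∀ U₁ : Submodule ℝ U, (∀ u ∈ U₁, u ≠ 0 → B u u < 0) → finrank ℝ U₁ ≤ 1)
    (n₁ n₂ : U) :
    ∃ x y : ℝ, (x ≠ 0 ∨ y ≠ 0) ∧ 0 ≤ B (x • n₁ + y • n₂) (x • n₁ + y • n₂) := by
  by_contra! hneg
  have hind : LinearIndependent ℝ ![n₁, n₂] := LinearIndependent.pair_iff.2 fun x y h => by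
    by_contra! hxy
    simpa [h] using hneg x y (by tauto)
  have := hBlor (span ℝ {n₁, n₂}) fun u hu hu0 => by
    obtain ⟨x, y, rfl⟩ := mem_span_pair.1 hu
    exact hneg x y (by contrapose! hu0; simp [hu0])
  rw [← Matrix.range_cons_cons_empty, finrank_span_eq_card hind] at this
  simp at this

lemma mem_span_singleton_of_isotropic_of_orthogonal (hBsymm : ∀ u w, B u w = B w u)
    (hB : B.SeparatingLeft)
    (hBlor : ∀ U₁ : Submodule ℝ U, (∀ u ∈ U₁, u ≠ 0 → B u u < 0) → finrank ℝ U₁ ≤ 1)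
    {e w : U} (he : e ≠ 0) (hee : B e e = 0) (hww : B w w = 0) (hew : B e w = 0) :
    w ∈ span ℝ {e} := by
  -- otherwise, moving `e` and `w` slightly along a dual pair `u₁, u₂` spans a negative
  -- definite plane
  by_contra hw
  have hind : LinearIndependent ℝ ![e, w] :=
    (LinearIndependent.pair_iff' he).2 fun a ha => hw (mem_span_singleton.2 ⟨a, ha⟩)
  obtain ⟨u₁, he₁, hw₁⟩ := hB.exists_apply_eq_one_apply_eq_zero hind
  obtain ⟨u₂, hw₂, he₂⟩ :=
    hB.exists_apply_eq_one_apply_eq_zero (LinearIndependent.pair_symm_iff.1 hind)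
  set a := B u₁ u₁
  set b := B u₂ u₂
  set c := B u₁ u₂
  set M := |a| + |b| + |c| with hM
  set s := (1 + M)⁻¹
  obtain ⟨x, y, hxy, hnonneg⟩ := exists_smul_add_smul_nonneg hBlor (e - s • u₁) (w - s • u₂)
  have hexpand : B (x • (e - s • u₁) + y • (w - s • u₂)) (x • (e - s • u₁) + y • (w - s • u₂))
      = -2 * s * (x ^ 2 + y ^ 2) + s ^ 2 * (a * x ^ 2 + 2 * c * x * y + b * y ^ 2) := by
    simp only [map_add, map_sub, map_smul, LinearMap.add_apply, LinearMap.sub_apply,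
      LinearMap.smul_apply, smul_eq_mul, hBsymm u₁ e, hBsymm u₁ w, hBsymm u₂ e, hBsymm u₂ w,
      hBsymm u₂ u₁, hBsymm w e, hee, hww, hew, he₁, hw₁, he₂, hw₂]
    ring
  have hS : 0 < x ^ 2 + y ^ 2 := by rcases hxy with h | h <;> positivity
  have hQ : a * x ^ 2 + 2 * c * x * y + b * y ^ 2 ≤ M * (x ^ 2 + y ^ 2) := by
    have hcxy : 2 * c * x * y ≤ |c| * (x ^ 2 + y ^ 2) := by
      rcases abs_cases c with ⟨h, _⟩ | ⟨h, _⟩ <;> rw [h] <;>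
        nlinarith [sq_nonneg (x - y), sq_nonneg (x + y)]
    rw [hM]
    nlinarith [mul_le_mul_of_nonneg_right (le_abs_self a) (sq_nonneg x),
      mul_le_mul_of_nonneg_right (le_abs_self b) (sq_nonneg y),
      mul_nonneg (abs_nonneg a) (sq_nonneg y), mul_nonneg (abs_nonneg b) (sq_nonneg x)]
  have hs : 0 < s := by positivity
  have hsM : s * M < 1 := by
    have : s * (1 + M) = 1 := inv_mul_cancel₀ (by positivity)
    linarith
  rw [hexpand] at hnonneg
  nlinarith [mul_le_mul_of_nonneg_left hQ (sq_nonneg s), mul_pos hs hS]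

lemma finrank_add_finrank_orthogonal_of_separatingLeft [FiniteDimensional ℝ U]
    (hB : B.SeparatingLeft) (W : Submodule ℝ U) :
    finrank ℝ W + finrank ℝ (BilinForm.orthogonal B W) = finrank ℝ U := by
  have := BilinForm.finrank_add_finrank_orthogonal' (B := B) W
  rwa [separatingLeft_iff_ker_eq_bot.1 hB, inf_bot_eq, finrank_bot, add_zero] at this

end Lorentzian

section Flat

variable {V U : Type*} [AddCommGroup V] [Module ℝ V] [AddCommGroup U] [Module ℝ U]

def IsRegularPoint (β : V →ₗ[ℝ] V →ₗ[ℝ] U) (x₀ : V) : Prop :=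
  ∀ x, finrank ℝ (range (β x)) ≤ finrank ℝ (range (β x₀))

def IsFlat (B : U →ₗ[ℝ] U →ₗ[ℝ] ℝ) (β : V →ₗ[ℝ] V →ₗ[ℝ] U) : Prop :=
  ∀ x₁ x₂ x₃ x₄, B (β x₁ x₃) (β x₂ x₄) = B (β x₁ x₄) (β x₂ x₃)

variable {B : U →ₗ[ℝ] U →ₗ[ℝ] ℝ} {β : V →ₗ[ℝ] V →ₗ[ℝ] U} {x₀ z z' : V}

lemma exists_isRegularPoint [FiniteDimensional ℝ U] (β : V →ₗ[ℝ] V →ₗ[ℝ] U) :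
    ∃ x₀, IsRegularPoint β x₀ := by
  have hbdd : BddAbove (Set.range fun x => finrank ℝ (range (β x))) :=
    ⟨finrank ℝ U, by rintro _ ⟨x, rfl⟩; exact finrank_le _⟩
  obtain ⟨x₀, hx₀⟩ := Nat.sSup_mem (Set.range_nonempty _) hbdd
  exact ⟨x₀, fun x => (le_csSup hbdd ⟨x, rfl⟩).trans_eq hx₀.symm⟩

lemma IsRegularPoint.apply_mem_range [FiniteDimensional ℝ U] (hx₀ : IsRegularPoint β x₀)
    (hz : β x₀ z = 0) (y : V) : β y z ∈ range (β x₀) :=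
  (β x₀).mem_range_of_finrank_range_add_smul_le (β y)
    (fun t => by rw [← map_smul, ← map_add]; exact hx₀ _) hz

lemma IsFlat.apply_ker_apply_eq_zero (hβ : IsFlat B β) (hz : β x₀ z = 0) (y x : V) :
    B (β y z) (β x₀ x) = 0 := by
  rw [hβ, hz, map_zero]

lemma IsFlat.apply_ker_apply_ker_eq_zero [FiniteDimensional ℝ U] (hβ : IsFlat B β)
    (hx₀ : IsRegularPoint β x₀) (hz : β x₀ z = 0) (hz' : β x₀ z' = 0) (y y' : V) :
    B (β y z) (β y' z') = 0 := by
  obtain ⟨x, hx⟩ := hx₀.apply_mem_range hz' y'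
  rw [← hx, hβ.apply_ker_apply_eq_zero hz]

lemma IsFlat.apply_apply_ker_self_eq_zero [FiniteDimensional ℝ U] (hβ : IsFlat B β)
    (hβsymm : ∀ x y, β x y = β y x) (hx₀ : IsRegularPoint β x₀) (hz : β x₀ z = 0) (a b : V) :
    B (β a b) (β z z) = 0 := by
  obtain ⟨x, hx⟩ := hx₀.apply_mem_range hz b
  rw [hβ, hβsymm z b, ← hx, hβ.apply_ker_apply_eq_zero hz]

lemma IsFlat.span_apply_self_le_orthogonal_range [FiniteDimensional ℝ U] (hβ : IsFlat B β)
    (hβsymm : ∀ x y, β x y = β y x) (hx₀ : IsRegularPoint β x₀) (hz : β x₀ z = 0) :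
    span ℝ {β z z} ≤ BilinForm.orthogonal B (range (β x₀)) := by
  rw [span_singleton_le_iff_mem]
  rintro _ ⟨x, rfl⟩
  exact hβ.apply_apply_ker_self_eq_zero hβsymm hx₀ hz x₀ x

lemma IsFlat.apply_ker_mem_span [FiniteDimensional ℝ U] (hβ : IsFlat B β)
    (hx₀ : IsRegularPoint β x₀) (hBsymm : ∀ u w, B u w = B w u) (hB : B.SeparatingLeft)
    (hBlor : ∀ U₁ : Submodule ℝ U, (∀ u ∈ U₁, u ≠ 0 → B u u < 0) → finrank ℝ U₁ ≤ 1)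
    (hz : β x₀ z = 0) (he : β z z ≠ 0) (hz' : β x₀ z' = 0) (y : V) :
    β y z' ∈ span ℝ {β z z} :=
  mem_span_singleton_of_isotropic_of_orthogonal hBsymm hB hBlor he
    (hβ.apply_ker_apply_ker_eq_zero hx₀ hz hz z z)
    (hβ.apply_ker_apply_ker_eq_zero hx₀ hz' hz' y y)
    (hβ.apply_ker_apply_ker_eq_zero hx₀ hz hz' z y)

lemma IsFlat.apply_mem_orthogonal_range [FiniteDimensional ℝ U] (hβ : IsFlat B β)
    (hβsymm : ∀ x y, β x y = β y x) (hBsymm : ∀ u w, B u w = B w u) (hx₀ : IsRegularPoint β x₀)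
    (hz : β x₀ z = 0) (hz' : β x₀ z' = β z z) (y : V) :
    β y z' ∈ BilinForm.orthogonal B (range (β x₀)) := by
  rintro _ ⟨x, rfl⟩
  rw [hβ, hz', hBsymm, hβ.apply_apply_ker_self_eq_zero hβsymm hx₀ hz]

end Flat

lemma mem_iInf_ker_sub_smulRight {V U : Type*} [AddCommGroup V] [Module ℝ V] [AddCommGroup U]
    [Module ℝ U] {β : V →ₗ[ℝ] V →ₗ[ℝ] U} {e : U} {f : U →ₗ[ℝ] ℝ} (hf : f e = 1) {z : V}
    (hz : ∀ y, β z y ∈ span ℝ {e}) :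
    z ∈ ⨅ y, ker (β.flip y - smulRight ((β.compr₂ f).flip y) e) := by
  refine mem_iInf _ |>.2 fun y => ?_
  obtain ⟨a, ha⟩ := mem_span_singleton.1 (hz y)
  simp [← ha, hf]

theorem stmt2_general {V U : Type*} [AddCommGroup V] [Module ℝ V] [FiniteDimensional ℝ V]
    [AddCommGroup U] [Module ℝ U] [FiniteDimensional ℝ U]
    (B : U →ₗ[ℝ] U →ₗ[ℝ] ℝ) (hBsymm : ∀ u w, B u w = B w u)
    (hBnondeg : ∀ u : U, (∀ w : U, B u w = 0) → u = 0)
    -- Lorentzian signature: there is a vector on which `B` is negative, and every subspace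
    -- on which `B` is negative definite has dimension at most 1.
    (hBlor : ∀ U₁ : Submodule ℝ U, (∀ u ∈ U₁, u ≠ 0 → B u u < 0) → finrank ℝ U₁ ≤ 1)
    (β : V →ₗ[ℝ] V →ₗ[ℝ] U) (hβsymm : ∀ x y, β x y = β y x)
    (hflat : ∀ x₁ x₂ x₃ x₄ : V, B (β x₁ x₃) (β x₂ x₄) - B (β x₁ x₄) (β x₂ x₃) = 0)
    (hdim : finrank ℝ U < finrank ℝ V)
    (hdef : ∀ x : V, x ≠ 0 → β x x ≠ 0) :
    ∃ e : U, e ≠ 0 ∧ B e e = 0 ∧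
      ∃ φ : V →ₗ[ℝ] V →ₗ[ℝ] ℝ, (∀ x y, φ x y = φ y x) ∧
        finrank ℝ V + 2 ≤
          finrank ℝ
            ↥(⨅ y : V, LinearMap.ker (β.flip y - LinearMap.smulRight (φ.flip y) e)) +
            finrank ℝ U := by
  have hβ : IsFlat B β := fun x₁ x₂ x₃ x₄ => sub_eq_zero.1 (hflat x₁ x₂ x₃ x₄)
  obtain ⟨x₀, hx₀⟩ := exists_isRegularPoint β
  set N := ker (β x₀)
  set O := BilinForm.orthogonal B (range (β x₀))
  obtain ⟨z₀, hz₀, hz₀ne⟩ := N.exists_mem_ne_zero_of_ne_bot (ker_ne_bot_of_finrank_lt hdim)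
  set e := β z₀ z₀
  have he : e ≠ 0 := hdef z₀ hz₀ne
  obtain ⟨f, hf⟩ := Projective.exists_dual_eq_one ℝ he
  refine ⟨e, he, hβ.apply_ker_apply_ker_eq_zero hx₀ hz₀ hz₀ z₀ z₀, β.compr₂ f,
    fun x y => by simp [hβsymm x y], ?_⟩
  set K := ⨅ y, ker (β.flip y - smulRight ((β.compr₂ f).flip y) e)
  have hNK : N ≤ K := fun z hz => mem_iInf_ker_sub_smulRight hf fun y => hβsymm z y ▸
    hβ.apply_ker_mem_span hx₀ hBsymm hBnondeg hBlor hz₀ he hz y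
  have hrank : finrank ℝ (range (β x₀)) + finrank ℝ N = finrank ℝ V :=
    finrank_range_add_finrank_ker _
  have hO : finrank ℝ (range (β x₀)) + finrank ℝ O = finrank ℝ U :=
    finrank_add_finrank_orthogonal_of_separatingLeft hBnondeg _
  have heO : span ℝ {e} ≤ O := hβ.span_apply_self_le_orthogonal_range hβsymm hx₀ hz₀
  rcases lt_or_ge 1 (finrank ℝ O) with hO₂ | hO₁
  · have := finrank_mono hNK
    omega
  have hOe : O = span ℝ {e} :=
    (eq_of_le_of_finrank_le heO (by rwa [finrank_span_singleton he])).symm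
  obtain ⟨z₁, hz₁⟩ := hx₀.apply_mem_range hz₀ z₀
  have hz₁K : z₁ ∈ K := mem_iInf_ker_sub_smulRight hf fun y => hβsymm z₁ y ▸
    hOe ▸ hβ.apply_mem_orthogonal_range hβsymm hBsymm hx₀ hz₀ hz₁ y
  have hNK' : finrank ℝ N < finrank ℝ K := finrank_lt_finrank_of_lt <|
    SetLike.lt_iff_le_and_exists.2 ⟨hNK, z₁, hz₁K, fun h => he (hz₁.symm.trans h)⟩
  rw [hOe, finrank_span_singleton he] at hO
  omega

/-- Moore. Let `V` be a finite-dimensional real vector space, `U` a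
finite-dimensional real vector space with a nondegenerate symmetric bilinear form `B` of
Lorentzian signature (negative index 1), and `β : V × V → U` a symmetric bilinear map that is
flat with respect to `B`. If `dim V > dim U` and `β(x,x) ≠ 0` for every nonzero `x`, then
there are a nonzero isotropic vector `e ∈ U` and a symmetric bilinear form `φ : V × V → ℝ`
such that the nullity space `N(β − φ·e) = {x : ∀ y, β(x,y) − φ(x,y)e = 0}` has dimension at
least `dim V − dim U + 2`. -/
theorem stmt2 {V U : Type*} [AddCommGroup V] [Module ℝ V] [FiniteDimensional ℝ V]
    [AddCommGroup U] [Module ℝ U] [FiniteDimensional ℝ U]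
    (B : U →ₗ[ℝ] U →ₗ[ℝ] ℝ) (hBsymm : ∀ u w, B u w = B w u)
    (hBnondeg : ∀ u : U, (∀ w : U, B u w = 0) → u = 0)
    -- Lorentzian signature: there is a vector on which `B` is negative, and every subspace
    -- on which `B` is negative definite has dimension at most 1.
    (hBneg : ∃ u : U, B u u < 0)
    (hBlor : ∀ U₁ : Submodule ℝ U, (∀ u ∈ U₁, u ≠ 0 → B u u < 0) → finrank ℝ U₁ ≤ 1)
    (β : V →ₗ[ℝ] V →ₗ[ℝ] U) (hβsymm : ∀ x y, β x y = β y x)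
    (hflat : ∀ x₁ x₂ x₃ x₄ : V, B (β x₁ x₃) (β x₂ x₄) - B (β x₁ x₄) (β x₂ x₃) = 0)
    (hdim : finrank ℝ U < finrank ℝ V)
    (hdef : ∀ x : V, x ≠ 0 → β x x ≠ 0) :
    ∃ e : U, e ≠ 0 ∧ B e e = 0 ∧
      ∃ φ : V →ₗ[ℝ] V →ₗ[ℝ] ℝ, (∀ x y, φ x y = φ y x) ∧
        finrank ℝ V + 2 ≤
          finrank ℝ
            ↥(⨅ y : V, LinearMap.ker (β.flip y - LinearMap.smulRight (φ.flip y) e)) +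
            finrank ℝ U :=
  stmt2_general B hBsymm hBnondeg hBlor β hβsymm hflat hdim hdef
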